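/- arXiv:1910.08441 — 3 statements merged into one kernel-verified Lean document; each statement's English description precedes it below -/
import Mathlib

section
/- If (M,G) is a connected Riemannian manifold admitting a nonzero smooth function Λ with Hess_G(Λ) = GΛ (a Hesse manifold), then M is non-compact. -/
/-!
Along a unit-speed geodesic γ the Hesse equation reads (Λ ∘ γ)'' = Λ ∘ γ, so
2 (Λ ∘ γ)(t) = a eᵗ + b e⁻ᵗ. On a compact manifold Λ is bounded, which forces a = b = 0;
since geodesics pass through every point, Λ ≡ 0.
-/

open Real

theorem eq_mul_exp_of_hasDerivAt_mul_self {u : ℝ → ℝ} {c : ℝ}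
    (hu : ∀ t, HasDerivAt u (c * u t) t) (t : ℝ) : u t = u 0 * exp (c * t) := by
  have hw : ∀ s, HasDerivAt (fun s => u s * exp (-(c * s))) 0 s := fun s => by
    have hexp : HasDerivAt (fun s => exp (-(c * s))) (exp (-(c * s)) * -c) s := by
      simpa using ((hasDerivAt_id s).const_mul c).neg.exp
    exact ((hu s).mul hexp).congr_deriv (by ring)
  have hconst := is_const_of_deriv_eq_zero (fun s => (hw s).differentiableAt)
    (fun s => (hw s).deriv) t 0
  simp only [mul_zero, neg_zero, exp_zero, mul_one] at hconst
  rw [← hconst, mul_assoc, ← exp_add, neg_add_cancel, exp_zero, mul_one]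

/-- `f' + f` and `f' - f` solve `u' = u` and `u' = -u`. -/
theorem two_mul_eq_of_deriv_deriv_eq_self {f : ℝ → ℝ} (hf : ContDiff ℝ 2 f)
    (hf'' : ∀ t, deriv (deriv f) t = f t) (t : ℝ) :
    2 * f t = (deriv f 0 + f 0) * exp t + (f 0 - deriv f 0) * exp (-t) := by
  obtain ⟨hf₁, -, hf₂⟩ := contDiff_succ_iff_deriv.mp (show ContDiff ℝ (1 + 1) f from hf)
  have hd : ∀ s, HasDerivAt f (deriv f s) s := fun s => (hf₁ s).hasDerivAt
  have hd' : ∀ s, HasDerivAt (deriv f) (f s) s := fun s =>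
    hf'' s ▸ ((hf₂.differentiable one_ne_zero) s).hasDerivAt
  have hsum := eq_mul_exp_of_hasDerivAt_mul_self (u := fun s => deriv f s + f s) (c := 1)
    (fun s => ((hd' s).add (hd s)).congr_deriv (by ring)) t
  have hdiff := eq_mul_exp_of_hasDerivAt_mul_self (u := fun s => deriv f s - f s) (c := -1)
    (fun s => ((hd' s).sub (hd s)).congr_deriv (by ring)) t
  simp only [one_mul, neg_one_mul] at hsum hdiff
  linarith

theorem eq_zero_of_abs_mul_exp_add_mul_exp_neg_le {a b C : ℝ}
    (h : ∀ t, 0 ≤ t → |a * exp t + b * exp (-t)| ≤ C) : a = 0 := by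
  by_contra ha
  have hC : 0 ≤ C := (abs_nonneg _).trans (h 0 le_rfl)
  -- at this time `|a| eᵗ ≥ |a| (t + 1)` already exceeds the bound `C + |b|`
  set t := (C + |b|) / |a|
  have ht : 0 ≤ t := div_nonneg (add_nonneg hC (abs_nonneg b)) (abs_nonneg a)
  have hupper : |a| * exp t ≤ C + |b| := calc
    |a| * exp t = |a * exp t| := by rw [abs_mul, abs_of_pos (exp_pos t)]
    _ = |(a * exp t + b * exp (-t)) - b * exp (-t)| := by ring_nf
    _ ≤ |a * exp t + b * exp (-t)| + |b * exp (-t)| := abs_sub _ _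
    _ ≤ C + |b| := by
      refine add_le_add (h t ht) ?_
      rw [abs_mul, abs_of_pos (exp_pos _)]
      exact mul_le_of_le_one_right (abs_nonneg b) (exp_le_one_iff.mpr (by linarith))
  have hlower : C + |b| + |a| ≤ |a| * exp t := calc
    C + |b| + |a| = |a| * (t + 1) := by simp only [t]; field_simp
    _ ≤ |a| * exp t := by gcongr; exact add_one_le_exp t
  linarith [abs_pos.mpr ha]

theorem eq_zero_of_abs_le_of_deriv_deriv_eq_self {f : ℝ → ℝ} {C : ℝ} (hf : ContDiff ℝ 2 f)
    (hf'' : ∀ t, deriv (deriv f) t = f t) (hC : ∀ t, |f t| ≤ C) : f = 0 := by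
  set a := deriv f 0 + f 0
  set b := f 0 - deriv f 0
  have hsol : ∀ t, 2 * f t = a * exp t + b * exp (-t) :=
    two_mul_eq_of_deriv_deriv_eq_self hf hf''
  have hbound : ∀ t, |a * exp t + b * exp (-t)| ≤ 2 * C := fun t => by
    rw [← hsol, abs_mul, abs_two]
    linarith [hC t]
  have ha : a = 0 := eq_zero_of_abs_mul_exp_add_mul_exp_neg_le fun t _ => hbound t
  have hb : b = 0 := eq_zero_of_abs_mul_exp_add_mul_exp_neg_le fun t _ => by
    simpa only [neg_neg, add_comm] using hbound (-t)
  funext t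
  simpa [ha, hb] using hsol t

theorem hesse_manifold_noncompact_general
    {M : Type*} [MetricSpace M]
    (geo : Set (ℝ → M))
    (hexist : ∀ p : M, ∃ γ ∈ geo, γ 0 = p)
    (Λ : M → ℝ) (hΛc : Continuous Λ)
    (hHesse : ∀ γ ∈ geo, ContDiff ℝ 2 (fun s => Λ (γ s)) ∧
      ∀ t : ℝ, deriv (deriv (fun s => Λ (γ s))) t = Λ (γ t))
    (hΛne : Λ ≠ 0) :
    ¬ CompactSpace M := by
  intro hcompact
  obtain ⟨C, hC⟩ := isCompact_univ.exists_bound_of_continuousOn hΛc.continuousOn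
  refine hΛne (funext fun p => ?_)
  obtain ⟨γ, hγ, rfl⟩ := hexist p
  obtain ⟨hsmooth, hode⟩ := hHesse γ hγ
  have hvanish := eq_zero_of_abs_le_of_deriv_deriv_eq_self hsmooth hode
    fun t => (hC (γ t) trivial).trans_eq' (norm_eq_abs _).symm
  exact congrFun hvanish 0

/-- a connected Riemannian manifold (M,G) admitting a nonzero smooth
function Λ with Hess_G(Λ) = GΛ (a Hesse manifold) is non-compact.

The Riemannian structure is encoded intrinsically through its family `geo` of
unit-speed geodesics (curves that are local isometries from ℝ, which exist through
every point of a complete Riemannian manifold, and through every point of a compact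
one); the Hesse equation Hess_G(Λ) = GΛ is equivalent to the requirement that
(Λ∘γ)'' = Λ∘γ along every unit-speed geodesic γ. -/
theorem hesse_manifold_noncompact
    {M : Type*} [MetricSpace M] [ConnectedSpace M] [Nonempty M]
    (geo : Set (ℝ → M))
    (hunit : ∀ γ ∈ geo, ∀ t : ℝ, ∃ ε > 0, ∀ s₁ s₂ : ℝ,
      |s₁ - t| < ε → |s₂ - t| < ε → dist (γ s₁) (γ s₂) = |s₁ - s₂|)
    (hexist : ∀ p : M, ∃ γ ∈ geo, γ 0 = p)
    (Λ : M → ℝ) (hΛc : Continuous Λ)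
    (hHesse : ∀ γ ∈ geo, ContDiff ℝ 2 (fun s => Λ (γ s)) ∧
      ∀ t : ℝ, deriv (deriv (fun s => Λ (γ s))) t = Λ (γ t))
    (hΛne : Λ ≠ 0) :
    ¬ CompactSpace M :=
  hesse_manifold_noncompact_general geo hexist Λ hΛc hHesse hΛne
end

section
/- On a connected Riemannian n-manifold (M,G), the space of solutions of the Hesse equation Hess_G(Λ) = GΛ has dimension at most n+1: a solution Λ is uniquely determined by the values Λ(p) and dΛ(p) at any single point p ∈ M. -/
/-- Partial derivative ∂_i f at x. -/
noncomputable def pd {n : ℕ} (i : Fin n) (f : (Fin n → ℝ) → ℝ) (x : Fin n → ℝ) : ℝ :=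
  fderiv ℝ f x (Pi.single i 1)

open Finset in
/-- Christoffel symbols Γ^i_{jk} of the Levi-Civita connection of the metric g
(with inverse ginv), in local coordinates. -/
noncomputable def Gamma {n : ℕ} (g ginv : (Fin n → ℝ) → Matrix (Fin n) (Fin n) ℝ)
    (x : Fin n → ℝ) (i j k : Fin n) : ℝ :=
  (1 / 2) * ∑ l, ginv x i l *
    (pd j (fun y => g y l k) x + pd k (fun y => g y l j) x - pd l (fun y => g y j k) x)

open Finset in
/-- The Hesse equation Hess_G(Λ) = GΛ on a set U, in local coordinates. -/
def HesseOn {n : ℕ} (G Ginv : (Fin n → ℝ) → Matrix (Fin n) (Fin n) ℝ)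
    (U : Set (Fin n → ℝ)) (Λ : (Fin n → ℝ) → ℝ) : Prop :=
  ContDiffOn ℝ (⊤ : ℕ∞) Λ U ∧
  ∀ x ∈ U, ∀ i j, pd i (fun y => pd j Λ y) x - (∑ k, Gamma G Ginv x k i j * pd k Λ x)
      = G x i j * Λ x

lemma pd_contDiffOn {n : ℕ} {f : (Fin n → ℝ) → ℝ} {U : Set (Fin n → ℝ)}
    (hf : ContDiffOn ℝ (⊤ : ℕ∞) f U) (hU : IsOpen U) (i : Fin n) :
    ContDiffOn ℝ ((⊤:ℕ∞) : WithTop ℕ∞) (fun x => pd i f x) U :=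
  (hf.fderiv_of_isOpen hU (by simp)).clm_apply contDiffOn_const

lemma pd_diffAt {n : ℕ} {f : (Fin n → ℝ) → ℝ} {U : Set (Fin n → ℝ)}
    (hf : ContDiffOn ℝ (⊤ : ℕ∞) f U) (hU : IsOpen U) (i : Fin n) {x : Fin n → ℝ} (hx : x ∈ U) :
    DifferentiableAt ℝ (fun y => pd i f y) x :=
  (((pd_contDiffOn hf hU i).differentiableOn (by simp)).differentiableAt
    (hU.mem_nhds hx))

lemma diffAt_of_contDiffOn {n : ℕ} {f : (Fin n → ℝ) → ℝ} {U : Set (Fin n → ℝ)}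
    (hf : ContDiffOn ℝ (⊤ : ℕ∞) f U) (hU : IsOpen U) {x : Fin n → ℝ} (hx : x ∈ U) :
    DifferentiableAt ℝ f x :=
  ((hf.differentiableOn (by simp)).differentiableAt (hU.mem_nhds hx))

lemma fderiv_apply_eq_sum {n : ℕ} (g : (Fin n → ℝ) → ℝ) (y u : Fin n → ℝ) :
    fderiv ℝ g y u = ∑ i, u i * pd i g y := by
  have hu : u = ∑ i, u i • (Pi.single i (1:ℝ) : Fin n → ℝ) := by
    funext j; simp [Finset.sum_apply, Pi.single_apply]
  conv_lhs => rw [hu]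
  rw [map_sum]; simp [pd, smul_eq_mul]

lemma hasDerivAt_line {n : ℕ} (g : (Fin n → ℝ) → ℝ) (x0 u : Fin n → ℝ) (t : ℝ)
    (hg : DifferentiableAt ℝ g (x0 + t • u)) :
    HasDerivAt (fun s => g (x0 + s • u)) (∑ i, u i * pd i g (x0 + t • u)) t := by
  have hγ : HasDerivAt (fun s : ℝ => x0 + s • u) u t := by
    simpa using ((hasDerivAt_id t).smul_const u).const_add x0
  have := hg.hasFDerivAt.comp_hasDerivAt t hγ
  rwa [fderiv_apply_eq_sum] at this

section zero
variable {n : ℕ} {G Ginv : (Fin n → ℝ) → Matrix (Fin n) (Fin n) ℝ}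
  {U : Set (Fin n → ℝ)}

/-- local propagation of the zero-jet set, via Grönwall -/
lemma hesse_local (hU : IsOpen U)
    (CΓ CG : ℝ) (hCΓ0 : 0 ≤ CΓ) (hCG0 : 0 ≤ CG)
    {x0 : Fin n → ℝ} {r : ℝ} (hr : 0 < r) (hball : Metric.closedBall x0 r ⊆ U)
    (hΓb : ∀ y ∈ Metric.closedBall x0 r, ∀ i j k, |Gamma G Ginv y i j k| ≤ CΓ)
    (hGb : ∀ y ∈ Metric.closedBall x0 r, ∀ i j, |G y i j| ≤ CG)
    {Λ : (Fin n → ℝ) → ℝ} (hΛ : HesseOn G Ginv U Λ)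
    (h0 : Λ x0 = 0) (h1 : ∀ i, pd i Λ x0 = 0) :
    ∀ x ∈ Metric.ball x0 r, Λ x = 0 ∧ ∀ i, pd i Λ x = 0 := by
  obtain ⟨hsm, heq⟩ := hΛ
  intro x hx
  set u : Fin n → ℝ := x - x0 with hu
  have hunorm : ‖u‖ ≤ r := by
    have := Metric.mem_ball.mp hx
    rw [dist_eq_norm] at this
    exact le_of_lt this
  set γ : ℝ → (Fin n → ℝ) := fun s => x0 + s • u with hγdef
  have hγmem : ∀ s ∈ Set.Icc (0:ℝ) 1, γ s ∈ Metric.closedBall x0 r := by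
    intro s hs
    rw [Metric.mem_closedBall, dist_eq_norm]
    have : γ s - x0 = s • u := by simp [hγdef]
    rw [this, norm_smul]
    calc ‖(s:ℝ)‖ * ‖u‖ ≤ 1 * r := by
          apply mul_le_mul _ hunorm (norm_nonneg _) zero_le_one
          rw [Real.norm_eq_abs, abs_le]; exact ⟨by linarith [hs.1], hs.2⟩
      _ = r := one_mul r
  have hγU : ∀ s ∈ Set.Icc (0:ℝ) 1, γ s ∈ U := fun s hs => hball (hγmem s hs)
  set f : ℝ → (Fin (n+1) → ℝ) := fun s => Fin.cons (Λ (γ s)) (fun i => pd i Λ (γ s))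
    with hfdef
  set f' : ℝ → (Fin (n+1) → ℝ) := fun s =>
    Fin.cons (∑ i, u i * pd i Λ (γ s))
      (fun j => ∑ i, u i * pd i (fun y => pd j Λ y) (γ s)) with hf'def
  have hcontγ : Continuous γ := by
    apply continuous_const.add (continuous_id.smul continuous_const)
  have hVc : ContinuousOn
      (fun y => (Fin.cons (Λ y) (fun i => pd i Λ y) : Fin (n+1) → ℝ)) U := by
    rw [continuousOn_pi]
    intro j
    refine Fin.cases ?_ ?_ j
    · simp only [Fin.cons_zero]
      exact hsm.continuousOn
    · intro jj
      simp only [Fin.cons_succ]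
      exact (pd_contDiffOn hsm hU jj).continuousOn
  have hfc : ContinuousOn f (Set.Icc 0 1) :=
    hVc.comp hcontγ.continuousOn hγU
  have hfd : ∀ s ∈ Set.Ico (0:ℝ) 1, HasDerivWithinAt f (f' s) (Set.Ici s) s := by
    intro s hs
    have hsIcc : s ∈ Set.Icc (0:ℝ) 1 := ⟨hs.1, le_of_lt hs.2⟩
    have hmem := hγU s hsIcc
    apply HasDerivAt.hasDerivWithinAt
    rw [hasDerivAt_pi]
    intro j
    refine Fin.cases ?_ ?_ j
    · simpa [hfdef, hf'def] using
        hasDerivAt_line Λ x0 u s (diffAt_of_contDiffOn hsm hU hmem)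
    · intro jj
      simpa [hfdef, hf'def] using
        hasDerivAt_line (fun y => pd jj Λ y) x0 u s (pd_diffAt hsm hU jj hmem)
  set K : ℝ := n * r * (1 + n * CΓ + CG) with hKdef
  have hK0 : 0 ≤ K := by positivity
  have hbound : ∀ s ∈ Set.Ico (0:ℝ) 1, ‖f' s‖ ≤ K * ‖f s‖ + 0 := by
    intro s hs
    rw [add_zero]
    have hsIcc : s ∈ Set.Icc (0:ℝ) 1 := ⟨hs.1, le_of_lt hs.2⟩
    have hmemU := hγU s hsIcc
    have hmemB := hγmem s hsIcc
    have hfn0 : 0 ≤ ‖f s‖ := norm_nonneg _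
    have hui : ∀ i, |u i| ≤ r := fun i =>
      le_trans (by simpa [Real.norm_eq_abs] using norm_le_pi_norm u i) hunorm
    have hcomp : ∀ j', |f s j'| ≤ ‖f s‖ := fun j' => by
      simpa [Real.norm_eq_abs] using norm_le_pi_norm (f s) j'
    have hΛval : |Λ (γ s)| ≤ ‖f s‖ := by simpa [hfdef] using hcomp 0
    have hpdval : ∀ k, |pd k Λ (γ s)| ≤ ‖f s‖ := fun k => by
      simpa [hfdef] using hcomp k.succ
    rw [pi_norm_le_iff_of_nonneg (by positivity)]
    intro j
    rw [Real.norm_eq_abs]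
    refine Fin.cases ?_ ?_ j
    · -- |f' s 0| ≤ K ‖f s‖
      have : |f' s 0| ≤ ∑ i : Fin n, r * ‖f s‖ := by
        rw [hf'def]
        simp only [Fin.cons_zero]
        refine le_trans (Finset.abs_sum_le_sum_abs _ _) (Finset.sum_le_sum fun i _ => ?_)
        rw [abs_mul]
        exact mul_le_mul (hui i) (hpdval i) (abs_nonneg _) (le_trans (abs_nonneg _) (hui i))
      refine le_trans this ?_
      rw [Finset.sum_const, Finset.card_univ, Fintype.card_fin, nsmul_eq_mul, hKdef]
      have h1le : (1:ℝ) ≤ 1 + n * CΓ + CG := by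
        have h' : (0:ℝ) ≤ n * CΓ := by positivity
        linarith
      calc (n:ℝ) * (r * ‖f s‖) = n * r * ‖f s‖ * 1 := by ring
        _ ≤ n * r * ‖f s‖ * (1 + n * CΓ + CG) := by
            refine mul_le_mul_of_nonneg_left h1le ?_
            positivity
        _ = n * r * (1 + n * CΓ + CG) * ‖f s‖ := by ring
    · intro jj
      -- use the Hesse equation
      have hkey : ∀ i, pd i (fun y => pd jj Λ y) (γ s)
          = (∑ k, Gamma G Ginv (γ s) k i jj * pd k Λ (γ s)) + G (γ s) i jj * Λ (γ s) := by
        intro i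
        have := heq (γ s) hmemU i jj
        linarith [this]
      have hterm : ∀ i : Fin n, |u i * pd i (fun y => pd jj Λ y) (γ s)|
          ≤ r * ((n * CΓ + CG) * ‖f s‖) := by
        intro i
        rw [abs_mul, hkey i]
        have hin : |(∑ k, Gamma G Ginv (γ s) k i jj * pd k Λ (γ s)) + G (γ s) i jj * Λ (γ s)|
            ≤ (n * CΓ + CG) * ‖f s‖ := by
          calc |(∑ k, Gamma G Ginv (γ s) k i jj * pd k Λ (γ s)) + G (γ s) i jj * Λ (γ s)|
              ≤ |∑ k, Gamma G Ginv (γ s) k i jj * pd k Λ (γ s)| + |G (γ s) i jj * Λ (γ s)| :=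
                abs_add_le _ _
            _ ≤ (∑ k : Fin n, CΓ * ‖f s‖) + CG * ‖f s‖ := by
                apply add_le_add
                · refine le_trans (Finset.abs_sum_le_sum_abs _ _)
                    (Finset.sum_le_sum fun k _ => ?_)
                  rw [abs_mul]
                  exact mul_le_mul (hΓb _ hmemB k i jj) (hpdval k) (abs_nonneg _) hCΓ0
                · rw [abs_mul]
                  exact mul_le_mul (hGb _ hmemB i jj) hΛval (abs_nonneg _) hCG0
            _ = (n * CΓ + CG) * ‖f s‖ := by
                rw [Finset.sum_const, Finset.card_univ, Fintype.card_fin, nsmul_eq_mul]; ring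
        exact mul_le_mul (hui i) hin (abs_nonneg _) (le_trans (abs_nonneg _) (hui i))
      have : |f' s jj.succ| ≤ ∑ _i : Fin n, r * ((n * CΓ + CG) * ‖f s‖) := by
        rw [hf'def]
        simp only [Fin.cons_succ]
        exact le_trans (Finset.abs_sum_le_sum_abs _ _) (Finset.sum_le_sum fun i _ => hterm i)
      refine le_trans this ?_
      rw [Finset.sum_const, Finset.card_univ, Fintype.card_fin, nsmul_eq_mul, hKdef]
      calc (n:ℝ) * (r * ((n * CΓ + CG) * ‖f s‖))
          = n * r * (n * CΓ + CG) * ‖f s‖ := by ring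
        _ ≤ n * r * (1 + n * CΓ + CG) * ‖f s‖ := by
            refine mul_le_mul_of_nonneg_right ?_ hfn0
            refine mul_le_mul_of_nonneg_left (by linarith) ?_
            positivity
  have hf0 : ‖f 0‖ ≤ 0 := by
    have : f 0 = 0 := by
      have hγ0 : γ 0 = x0 := by simp [hγdef]
      funext j
      refine Fin.cases ?_ ?_ j
      · simp [hfdef, hγ0, h0]
      · intro jj; simp [hfdef, hγ0, h1 jj]
    rw [this, norm_zero]
  have := norm_le_gronwallBound_of_norm_deriv_right_le hfc hfd hf0 hbound 1
    (Set.right_mem_Icc.mpr zero_le_one)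
  rw [gronwallBound_ε0] at this
  simp only [zero_mul] at this
  have hf1 : f 1 = 0 := by
    rwa [norm_le_zero_iff] at this
  have hγ1 : γ 1 = x := by simp [hγdef, hu]
  constructor
  · have := congrFun hf1 0
    simpa [hfdef, hγ1] using this
  · intro i
    have := congrFun hf1 i.succ
    simpa [hfdef, hγ1] using this
end zero

section cont
variable {n : ℕ} {G Ginv : (Fin n → ℝ) → Matrix (Fin n) (Fin n) ℝ}
  (hG : ∀ i j, ContDiff ℝ (⊤ : ℕ∞) (fun x => G x i j))
  (hinv : ∀ x i j, (∑ k, Ginv x i k * G x k j) = if i = j then (1:ℝ) else 0)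

include hinv in
lemma ginv_eq : ∀ x, Ginv x = (G x)⁻¹ := by
  intro x
  have h : Ginv x * G x = 1 := by
    ext i j
    rw [Matrix.mul_apply, Matrix.one_apply]
    exact hinv x i j
  exact (Matrix.inv_eq_left_inv h).symm

include hinv in
lemma det_ne : ∀ x, (G x).det ≠ 0 := by
  intro x
  have h : Ginv x * G x = 1 := by
    ext i j
    rw [Matrix.mul_apply, Matrix.one_apply]
    exact hinv x i j
  have := congrArg Matrix.det h
  rw [Matrix.det_mul, Matrix.det_one] at this
  intro h0
  rw [h0, mul_zero] at this
  exact one_ne_zero this.symm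

include hG hinv in
lemma ginv_cont (i l : Fin n) : Continuous fun x => Ginv x i l := by
  have hGc : Continuous fun x => G x := by
    apply continuous_pi; intro a; apply continuous_pi; intro b
    exact (hG a b).continuous
  have hdet : Continuous fun x => (G x).det := hGc.matrix_det
  have hadj : Continuous fun x => (G x).adjugate := hGc.matrix_adjugate
  have : (fun x => Ginv x i l) = fun x => ((G x).det)⁻¹ * (G x).adjugate i l := by
    funext x
    rw [ginv_eq hinv x, Matrix.inv_def, Matrix.smul_apply, Ring.inverse_eq_inv', smul_eq_mul]
  rw [this]
  exact (hdet.inv₀ (det_ne hinv)).mul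
    (((continuous_apply l).comp ((continuous_apply i).comp hadj)))

include hG in
lemma pdG_cont (j l k : Fin n) : Continuous fun x => pd j (fun y => G y l k) x := by
  have := ((hG l k).fderiv_right (m := (⊤:ℕ∞)) (by simp)).continuous
  exact this.clm_apply continuous_const

include hG hinv in
lemma gamma_cont (i j k : Fin n) : Continuous fun x => Gamma G Ginv x i j k := by
  unfold Gamma
  apply Continuous.mul continuous_const
  apply continuous_finset_sum
  intro l _
  exact (ginv_cont hG hinv i l).mul
    (((pdG_cont hG j l k).add (pdG_cont hG k l j)).sub (pdG_cont hG l j k))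
end cont

section glob
variable {n : ℕ} {G Ginv : (Fin n → ℝ) → Matrix (Fin n) (Fin n) ℝ}
  {U : Set (Fin n → ℝ)}

lemma hesse_zero
    (hG : ∀ i j, ContDiff ℝ (⊤ : ℕ∞) (fun x => G x i j))
    (hinv : ∀ x i j, (∑ k, Ginv x i k * G x k j) = if i = j then (1:ℝ) else 0)
    (hU : IsOpen U) (hUconn : IsConnected U)
    {p : Fin n → ℝ} (hp : p ∈ U)
    {Λ : (Fin n → ℝ) → ℝ} (hΛ : HesseOn G Ginv U Λ)
    (h0 : Λ p = 0) (h1 : ∀ i, pd i Λ p = 0) :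
    ∀ x ∈ U, Λ x = 0 ∧ ∀ i, pd i Λ x = 0 := by
  classical
  set V : (Fin n → ℝ) → (Fin (n+1) → ℝ) :=
    fun y => Fin.cons (Λ y) (fun i => pd i Λ y) with hVdef
  have hVc : ContinuousOn V U := by
    rw [continuousOn_pi]
    intro j
    refine Fin.cases ?_ ?_ j
    · simp only [hVdef, Fin.cons_zero]
      exact hΛ.1.continuousOn
    · intro jj
      simp only [hVdef, Fin.cons_succ]
      exact (pd_contDiffOn hΛ.1 hU jj).continuousOn
  set A : Set (Fin n → ℝ) := {x | x ∈ U ∧ V x = 0} with hAdef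
  set B : Set (Fin n → ℝ) := {x | x ∈ U ∧ V x ≠ 0} with hBdef
  have hAopen : IsOpen A := by
    rw [Metric.isOpen_iff]
    rintro x1 ⟨hx1U, hx1V⟩
    obtain ⟨ε, hε, hballU⟩ := Metric.isOpen_iff.mp hU x1 hx1U
    set r := ε / 2 with hrdef
    have hr : 0 < r := by positivity
    have hcbU : Metric.closedBall x1 r ⊆ U :=
      subset_trans (Metric.closedBall_subset_ball (by linarith)) hballU
    have hcompact : IsCompact (Metric.closedBall x1 r) := isCompact_closedBall x1 r
    -- bound on Gamma
    obtain ⟨C1, hC1⟩ := hcompact.exists_bound_of_continuousOn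
      (f := fun y => (fun t : Fin n × Fin n × Fin n => Gamma G Ginv y t.1 t.2.1 t.2.2))
      (Continuous.continuousOn (by
        apply continuous_pi
        intro t
        exact gamma_cont hG hinv t.1 t.2.1 t.2.2))
    obtain ⟨C2, hC2⟩ := hcompact.exists_bound_of_continuousOn
      (f := fun y => (fun t : Fin n × Fin n => G y t.1 t.2))
      (Continuous.continuousOn (by
        apply continuous_pi
        intro t
        exact (hG t.1 t.2).continuous))
    set CΓ := max C1 0 with hCΓdef
    set CG := max C2 0 with hCGdef
    have hΓb : ∀ y ∈ Metric.closedBall x1 r, ∀ i j k, |Gamma G Ginv y i j k| ≤ CΓ := by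
      intro y hy i j k
      refine le_trans ?_ (le_max_left C1 0)
      have := norm_le_pi_norm (fun t : Fin n × Fin n × Fin n => Gamma G Ginv y t.1 t.2.1 t.2.2)
        (i, j, k)
      simp only [Real.norm_eq_abs] at this
      exact le_trans this (hC1 y hy)
    have hGb : ∀ y ∈ Metric.closedBall x1 r, ∀ i j, |G y i j| ≤ CG := by
      intro y hy i j
      refine le_trans ?_ (le_max_left C2 0)
      have := norm_le_pi_norm (fun t : Fin n × Fin n => G y t.1 t.2) (i, j)
      simp only [Real.norm_eq_abs] at this
      exact le_trans this (hC2 y hy)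
    have h0' : Λ x1 = 0 := by
      have := congrFun hx1V 0
      simpa [hVdef] using this
    have h1' : ∀ i, pd i Λ x1 = 0 := by
      intro i
      have := congrFun hx1V i.succ
      simpa [hVdef] using this
    have hloc := hesse_local (G := G) (Ginv := Ginv) hU CΓ CG
      (le_max_right C1 0) (le_max_right C2 0) hr hcbU hΓb hGb hΛ h0' h1'
    refine ⟨r, hr, ?_⟩
    intro y hy
    obtain ⟨hy0, hy1⟩ := hloc y hy
    refine ⟨hcbU (Metric.ball_subset_closedBall hy), ?_⟩
    funext j
    refine Fin.cases ?_ ?_ j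
    · simpa [hVdef] using hy0
    · intro jj; simpa [hVdef] using hy1 jj
  have hBopen : IsOpen B := by
    rw [isOpen_iff_mem_nhds]
    rintro x1 ⟨hx1U, hx1V⟩
    have hca : ContinuousAt V x1 := hVc.continuousAt (hU.mem_nhds hx1U)
    have hW : V ⁻¹' ({0}ᶜ) ∈ nhds x1 :=
      hca.preimage_mem_nhds (isOpen_compl_singleton.mem_nhds hx1V)
    have := Filter.inter_mem (hU.mem_nhds hx1U) hW
    refine Filter.mem_of_superset this ?_
    rintro y ⟨hyU, hyV⟩
    exact ⟨hyU, hyV⟩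
  intro x hx
  have hxA : x ∈ A := by
    by_contra hxA
    have hxB : x ∈ B := ⟨hx, fun h => hxA ⟨hx, h⟩⟩
    obtain ⟨y, hyU, hyA, hyB⟩ := hUconn.isPreconnected A B hAopen hBopen
      (fun z hz => by
        by_cases h : V z = 0
        · exact Or.inl ⟨hz, h⟩
        · exact Or.inr ⟨hz, h⟩)
      ⟨p, hp, hp, by
        funext j
        refine Fin.cases ?_ ?_ j
        · simpa [hVdef] using h0
        · intro jj; simpa [hVdef] using h1 jj⟩
      ⟨x, hx, hxB⟩
    exact hyB.2 hyA.2
  constructor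
  · have := congrFun hxA.2 0
    simpa [hVdef] using this
  · intro i
    have := congrFun hxA.2 i.succ
    simpa [hVdef] using this
end glob

lemma pd_comb {n : ℕ} {ι : Type} [Fintype ι] (c : ι → ℝ) (f : ι → (Fin n → ℝ) → ℝ)
    {x : Fin n → ℝ} (hdiff : ∀ k, DifferentiableAt ℝ (f k) x) (i : Fin n) :
    pd i (fun y => ∑ k, c k * f k y) x = ∑ k, c k * pd i (f k) x := by
  unfold pd
  have h1 : fderiv ℝ (fun y => ∑ k, c k * f k y) x
      = ∑ k, c k • fderiv ℝ (f k) x := by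
    rw [fderiv_fun_sum (fun k _ => (hdiff k).const_mul (c k))]
    exact Finset.sum_congr rfl fun k _ => fderiv_const_mul (hdiff k) (c k)
  rw [h1]
  simp [ContinuousLinearMap.sum_apply, smul_eq_mul]

section comb
variable {n : ℕ} {G Ginv : (Fin n → ℝ) → Matrix (Fin n) (Fin n) ℝ}
  {U : Set (Fin n → ℝ)}

lemma hesse_comb {ι : Type} [Fintype ι] (hU : IsOpen U)
    (c : ι → ℝ) (Λ : ι → (Fin n → ℝ) → ℝ) (h : ∀ k, HesseOn G Ginv U (Λ k)) :
    HesseOn G Ginv U (fun x => ∑ k, c k * Λ k x) := by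
  constructor
  · exact ContDiffOn.sum fun k _ => contDiffOn_const.mul (h k).1
  intro x hx i j
  have hpdS : ∀ k' : Fin n, pd k' (fun y => ∑ k, c k * Λ k y) x
      = ∑ k, c k * pd k' (Λ k) x :=
    fun k' => pd_comb c Λ (fun k => diffAt_of_contDiffOn (h k).1 hU hx) k'
  have hev : (fun y => pd j (fun z => ∑ k, c k * Λ k z) y)
      =ᶠ[nhds x] (fun y => ∑ k, c k * pd j (Λ k) y) := by
    filter_upwards [hU.mem_nhds hx] with y hy
    exact pd_comb c Λ (fun k => diffAt_of_contDiffOn (h k).1 hU hy) j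
  have h2a : pd i (fun y => pd j (fun z => ∑ k, c k * Λ k z) y) x
      = pd i (fun y => ∑ k, c k * pd j (Λ k) y) x :=
    congrArg (fun L : (Fin n → ℝ) →L[ℝ] ℝ => L (Pi.single i 1)) hev.fderiv_eq
  have h2 : pd i (fun y => pd j (fun z => ∑ k, c k * Λ k z) y) x
      = ∑ k, c k * pd i (fun y => pd j (Λ k) y) x := by
    rw [h2a]
    exact pd_comb c (fun k y => pd j (Λ k) y) (fun k => pd_diffAt (h k).1 hU j hx) i
  rw [h2]
  simp only [hpdS]
  have swap : ∑ k' : Fin n, Gamma G Ginv x k' i j * ∑ k, c k * pd k' (Λ k) x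
      = ∑ k, c k * ∑ k' : Fin n, Gamma G Ginv x k' i j * pd k' (Λ k) x := by
    simp_rw [Finset.mul_sum]
    rw [Finset.sum_comm]
    refine Finset.sum_congr rfl fun k _ => Finset.sum_congr rfl fun k' _ => by ring
  rw [swap, ← Finset.sum_sub_distrib, Finset.mul_sum]
  refine Finset.sum_congr rfl fun k _ => ?_
  have := (h k).2 x hx i j
  calc c k * pd i (fun y => pd j (Λ k) y) x
        - c k * ∑ k' : Fin n, Gamma G Ginv x k' i j * pd k' (Λ k) x
      = c k * (pd i (fun y => pd j (Λ k) y) x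
        - ∑ k' : Fin n, Gamma G Ginv x k' i j * pd k' (Λ k) x) := by ring
    _ = c k * (G x i j * Λ k x) := by rw [this]
    _ = G x i j * (c k * Λ k x) := by ring
end comb


open Finset in
/-- on a connected Riemannian n-manifold, a solution of the Hesse
equation is uniquely determined by its value and differential at a single point p;
consequently the solution space has dimension at most n+1 (any n+2 solutions are
linearly dependent). -/
theorem hesse_solution_space_dimension {n : ℕ}
    (G Ginv : (Fin n → ℝ) → Matrix (Fin n) (Fin n) ℝ)
    (hG : ∀ i j, ContDiff ℝ (⊤ : ℕ∞) (fun x => G x i j))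
    (hsym : ∀ x i j, G x i j = G x j i)
    (hinv : ∀ x i j, (∑ k, Ginv x i k * G x k j) = if i = j then (1:ℝ) else 0)
    (hpos : ∀ (x : Fin n → ℝ) (v : Fin n → ℝ), v ≠ 0 → 0 < ∑ i, ∑ j, G x i j * v i * v j)
    (U : Set (Fin n → ℝ)) (hU : IsOpen U) (hUconn : IsConnected U)
    (p : Fin n → ℝ) (hp : p ∈ U) :
    (∀ Λ₁ Λ₂ : (Fin n → ℝ) → ℝ, HesseOn G Ginv U Λ₁ → HesseOn G Ginv U Λ₂ →
      Λ₁ p = Λ₂ p → (∀ i, pd i Λ₁ p = pd i Λ₂ p) → ∀ x ∈ U, Λ₁ x = Λ₂ x) ∧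
    (∀ Λ : Fin (n + 2) → (Fin n → ℝ) → ℝ, (∀ k, HesseOn G Ginv U (Λ k)) →
      ∃ c : Fin (n + 2) → ℝ, c ≠ 0 ∧ ∀ x ∈ U, (∑ k, c k * Λ k x) = 0) := by
  constructor
  · intro Λ₁ Λ₂ h₁ h₂ hval hder x hx
    set c : Fin 2 → ℝ := ![1, -1] with hcdef
    set Λf : Fin 2 → (Fin n → ℝ) → ℝ := ![Λ₁, Λ₂] with hΛfdef
    have hcomb : HesseOn G Ginv U (fun y => ∑ k, c k * Λf k y) :=
      hesse_comb hU c Λf (by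
        intro k
        refine Fin.cases ?_ ?_ k
        · exact h₁
        · intro k'
          have : k' = 0 := Subsingleton.elim _ _
          subst this
          exact h₂)
    have hS : ∀ y, (∑ k, c k * Λf k y) = Λ₁ y - Λ₂ y := by
      intro y
      simp [hcdef, hΛfdef, Fin.sum_univ_two]
      ring
    have h0 : (fun y => ∑ k, c k * Λf k y) p = 0 := by
      simp only [hS, hval, sub_self]
    have h1 : ∀ i, pd i (fun y => ∑ k, c k * Λf k y) p = 0 := by
      intro i
      rw [pd_comb c Λf (fun k => by
        refine Fin.cases ?_ ?_ k
        · exact diffAt_of_contDiffOn h₁.1 hU hp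
        · intro k'
          have : k' = 0 := Subsingleton.elim _ _
          subst this
          exact diffAt_of_contDiffOn h₂.1 hU hp) i]
      simp [hcdef, hΛfdef, Fin.sum_univ_two, hder i]
    have := (hesse_zero hG hinv hU hUconn hp hcomb h0 h1 x hx).1
    rw [hS] at this
    linarith
  · intro Λ hΛ
    classical
    set v : Fin (n+2) → (Fin (n+1) → ℝ) :=
      fun k => Fin.cons (Λ k p) (fun i => pd i (Λ k) p) with hvdef
    have hnli : ¬ LinearIndependent ℝ v := by
      intro hli
      have hcard := hli.fintype_card_le_finrank
      rw [Module.finrank_fintype_fun_eq_card, Fintype.card_fin, Fintype.card_fin] at hcard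
      omega
    obtain ⟨g, hg0, k0, hk0⟩ := Fintype.not_linearIndependent_iff.mp hnli
    refine ⟨g, fun h => hk0 (by rw [h]; rfl), ?_⟩
    intro x hx
    have hcomb : HesseOn G Ginv U (fun y => ∑ k, g k * Λ k y) :=
      hesse_comb hU g Λ hΛ
    have h0 : (fun y => ∑ k, g k * Λ k y) p = 0 := by
      have := congrFun hg0 0
      simpa [hvdef, Finset.sum_apply, smul_eq_mul] using this
    have h1 : ∀ i, pd i (fun y => ∑ k, g k * Λ k y) p = 0 := by
      intro i
      rw [pd_comb g Λ (fun k => diffAt_of_contDiffOn (hΛ k).1 hU hp) i]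
      have := congrFun hg0 i.succ
      simpa [hvdef, Finset.sum_apply, smul_eq_mul] using this
    exact (hesse_zero hG hinv hU hUconn hp hcomb h0 h1 x hx).1
end

section
/- On the Poincaré disk 𝔻 = (D, G) with metric G of Gaussian curvature -1, for every B ∈ ℝ³ the function Λ_B(u) = (B, Ξ(u)) satisfies the Hesse equation Hess_G(Λ_B) = G·Λ_B, where Ξ is the Weierstrass map and (·,·) the Minkowski pairing of signature (1,2). -/
/-- The open unit disk in ℝ² ≅ ℂ. -/
def diskR : Set (Fin 2 → ℝ) := {x | x 0 ^ 2 + x 1 ^ 2 < 1}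

/-- The Poincaré metric G = 4|du|²/(1-|u|²)² (Gaussian curvature -1) on the unit disk. -/
noncomputable def gP (x : Fin 2 → ℝ) : Matrix (Fin 2) (Fin 2) ℝ :=
  fun i j => if i = j then 4 / (1 - (x 0 ^ 2 + x 1 ^ 2)) ^ 2 else 0

/-- The inverse Poincaré metric. -/
noncomputable def gPinv (x : Fin 2 → ℝ) : Matrix (Fin 2) (Fin 2) ℝ :=
  fun i j => if i = j then (1 - (x 0 ^ 2 + x 1 ^ 2)) ^ 2 / 4 else 0

/-- The Minkowski pairing of signature (1,2) on ℝ³. -/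
noncomputable def mink (x y : Fin 3 → ℝ) : ℝ := -(x 0 * y 0) + x 1 * y 1 + x 2 * y 2

/-- The Weierstrass map Ξ in real coordinates on the unit disk. -/
noncomputable def XiR (x : Fin 2 → ℝ) : Fin 3 → ℝ :=
  ![(1 + (x 0 ^ 2 + x 1 ^ 2)) / (1 - (x 0 ^ 2 + x 1 ^ 2)),
    2 * x 0 / (1 - (x 0 ^ 2 + x 1 ^ 2)),
    2 * x 1 / (1 - (x 0 ^ 2 + x 1 ^ 2))]

/-- Λ_B = (B, Ξ(·)). -/
noncomputable def LB (B : Fin 3 → ℝ) (x : Fin 2 → ℝ) : ℝ := mink B (XiR x)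

/-! The Poincaré metric is conformal to the Euclidean one, `G = c δ` with `c = 4 / D²` and
`D = 1 - |u|²`, so its Christoffel symbols are
`Γᵏᵢⱼ = (δₖⱼ ∂ᵢc + δₖᵢ ∂ⱼc - δᵢⱼ ∂ₖc) / (2c) = 2 (δₖⱼ uᵢ + δₖᵢ uⱼ - δᵢⱼ uₖ) / D`.
Writing `Λ_B = N / D` with `N` quadratic in `u`, the mixed terms of `∂ᵢ∂ⱼΛ_B - Γᵏᵢⱼ ∂ₖΛ_B`
cancel identically, and what is left on the diagonal reduces to the Euler-type identity
`u · ∇N - N = B⁰ D`, which turns it into `4 N / D³ = G Λ_B`. -/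

open Topology

section PartialDerivatives

variable {n : ℕ} {f g : (Fin n → ℝ) → ℝ} {x : Fin n → ℝ} {i : Fin n}

theorem pd_congr_of_eventuallyEq (h : f =ᶠ[𝓝 x] g) : pd i f x = pd i g x := by
  rw [pd, pd, h.fderiv_eq]

@[simp]
theorem pd_const (c : ℝ) : pd i (fun _ => c) x = 0 := by
  simp [pd]

@[simp]
theorem pd_apply (k : Fin n) : pd i (fun y => y k) x = if i = k then 1 else 0 := by
  simp [pd, (hasFDerivAt_apply k x).fderiv, Pi.single_apply, eq_comm]

theorem pd_add (hf : DifferentiableAt ℝ f x) (hg : DifferentiableAt ℝ g x) :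
    pd i (fun y => f y + g y) x = pd i f x + pd i g x := by
  simp [pd, fderiv_fun_add hf hg]

theorem pd_sub (hf : DifferentiableAt ℝ f x) (hg : DifferentiableAt ℝ g x) :
    pd i (fun y => f y - g y) x = pd i f x - pd i g x := by
  simp [pd, fderiv_fun_sub hf hg]

theorem pd_mul (hf : DifferentiableAt ℝ f x) (hg : DifferentiableAt ℝ g x) :
    pd i (fun y => f y * g y) x = pd i f x * g x + f x * pd i g x := by
  simp [pd, fderiv_fun_mul hf hg]; ring

theorem pd_inv (hf : DifferentiableAt ℝ f x) (hfx : f x ≠ 0) :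
    pd i (fun y => (f y)⁻¹) x = -pd i f x / f x ^ 2 := by
  have h : HasFDerivAt (fun y => (f y)⁻¹) _ x := (hasFDerivAt_inv hfx).comp x hf.hasFDerivAt
  simp [pd, h.fderiv]
  field_simp

theorem pd_div (hf : DifferentiableAt ℝ f x) (hg : DifferentiableAt ℝ g x) (hgx : g x ≠ 0) :
    pd i (fun y => f y / g y) x = (pd i f x * g x - f x * pd i g x) / g x ^ 2 := by
  simp only [div_eq_mul_inv]
  rw [pd_mul (g := fun y => (g y)⁻¹) hf (hg.inv hgx), pd_inv hg hgx]
  field_simp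
  ring

theorem pd_pow (hf : DifferentiableAt ℝ f x) (m : ℕ) :
    pd i (fun y => f y ^ m) x = m * f x ^ (m - 1) * pd i f x := by
  simp [pd, fderiv_fun_pow m hf]

end PartialDerivatives

section ConformalMetric

variable {n : ℕ} (c : (Fin n → ℝ) → ℝ) {ginv : (Fin n → ℝ) → Matrix (Fin n) (Fin n) ℝ}
  {x : Fin n → ℝ}

theorem Gamma_conformal (hginv : ∀ k l, ginv x k l = if k = l then (c x)⁻¹ else 0)
    (k i j : Fin n) :
    Gamma (fun y l m => if l = m then c y else 0) ginv x k i j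
      = ((if k = j then pd i c x else 0) + (if k = i then pd j c x else 0)
          - (if i = j then pd k c x else 0)) / (2 * c x) := by
  have hpd (l m p : Fin n) :
      pd p (fun y => if l = m then c y else 0) x = if l = m then pd p c x else 0 := by
    split_ifs <;> simp
  simp only [Gamma, hpd, hginv, ite_mul, zero_mul, Finset.sum_ite_eq, Finset.mem_univ, if_true]
  field_simp

theorem sum_Gamma_conformal_mul (hginv : ∀ k l, ginv x k l = if k = l then (c x)⁻¹ else 0)
    (i j : Fin n) (v : Fin n → ℝ) :
    ∑ k, Gamma (fun y l m => if l = m then c y else 0) ginv x k i j * v k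
      = (pd i c x * v j + pd j c x * v i - if i = j then ∑ k, pd k c x * v k else 0)
          / (2 * c x) := by
  simp only [Gamma_conformal c hginv, div_mul_eq_mul_div, ← Finset.sum_div, add_mul, sub_mul,
    Finset.sum_add_distrib, Finset.sum_sub_distrib, ite_mul, zero_mul, Finset.sum_ite_eq',
    Finset.mem_univ, if_true]
  split_ifs <;> simp

end ConformalMetric

section PoincareDisk

def oneSubNormSq (y : Fin 2 → ℝ) : ℝ := 1 - (y 0 ^ 2 + y 1 ^ 2)

variable {x : Fin 2 → ℝ}

theorem oneSubNormSq_pos (hx : x ∈ diskR) : 0 < oneSubNormSq x := by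
  rw [oneSubNormSq]; linarith [show x 0 ^ 2 + x 1 ^ 2 < 1 from hx]

theorem isOpen_diskR : IsOpen diskR :=
  isOpen_lt (by fun_prop) continuous_const

@[fun_prop]
theorem differentiable_oneSubNormSq : Differentiable ℝ oneSubNormSq := by
  unfold oneSubNormSq; fun_prop

theorem pd_oneSubNormSq (i : Fin 2) : pd i oneSubNormSq x = -2 * x i := by
  unfold oneSubNormSq
  fin_cases i <;> simp (disch := fun_prop) [pd_sub, pd_add, pd_pow]

theorem gP_eq_conformal : gP = fun y l m => if l = m then 4 / oneSubNormSq y ^ 2 else 0 := rfl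

theorem gPinv_apply (k l : Fin 2) :
    gPinv x k l = if k = l then (4 / oneSubNormSq x ^ 2)⁻¹ else 0 := by
  simp [gPinv, oneSubNormSq]

theorem pd_four_div_oneSubNormSq_sq (hx : x ∈ diskR) (i : Fin 2) :
    pd i (fun y => 4 / oneSubNormSq y ^ 2) x = 16 * x i / oneSubNormSq x ^ 3 := by
  have hD := (oneSubNormSq_pos hx).ne'
  rw [pd_div (by fun_prop) (by fun_prop) (by positivity), pd_pow (differentiable_oneSubNormSq x),
    pd_oneSubNormSq, pd_const]
  field_simp
  ring

theorem sum_Gamma_gP_mul (hx : x ∈ diskR) (i j : Fin 2) (v : Fin 2 → ℝ) :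
    ∑ k, Gamma gP gPinv x k i j * v k
      = 2 * (x i * v j + x j * v i - if i = j then ∑ k, x k * v k else 0) / oneSubNormSq x := by
  have hD := (oneSubNormSq_pos hx).ne'
  rw [gP_eq_conformal, sum_Gamma_conformal_mul _ gPinv_apply]
  simp only [pd_four_div_oneSubNormSq_sq hx, Fin.sum_univ_two]
  split_ifs <;> field_simp <;> ring

end PoincareDisk

section HesseEquation

variable (B : Fin 3 → ℝ) {x : Fin 2 → ℝ}

def LBNumer (y : Fin 2 → ℝ) : ℝ := -B 0 * (1 + (y 0 ^ 2 + y 1 ^ 2)) + 2 * (B 1 * y 0 + B 2 * y 1)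

@[fun_prop]
theorem differentiable_LBNumer : Differentiable ℝ (LBNumer B) := by
  unfold LBNumer; fun_prop

theorem LB_eq_div : LB B = fun y => LBNumer B y / oneSubNormSq y := by
  funext y
  simp [LB, mink, XiR, LBNumer, oneSubNormSq]
  ring

theorem pd_LBNumer (i : Fin 2) : pd i (LBNumer B) x = 2 * (B i.succ - B 0 * x i) := by
  unfold LBNumer
  fin_cases i <;> simp (disch := fun_prop) only [pd_add, pd_mul, pd_pow, pd_const, pd_apply] <;>
    simp <;> ring

theorem pd_LB (hx : x ∈ diskR) (j : Fin 2) :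
    pd j (LB B) x = 2 * (B j.succ - B 0 * x j) / oneSubNormSq x
      + 2 * x j * LBNumer B x / oneSubNormSq x ^ 2 := by
  have hD := (oneSubNormSq_pos hx).ne'
  rw [LB_eq_div, pd_div (by fun_prop) (by fun_prop) hD, pd_LBNumer, pd_oneSubNormSq]
  field_simp
  ring

theorem pd_pd_LB (hx : x ∈ diskR) (i j : Fin 2) :
    pd i (fun y => pd j (LB B) y) x
      = 4 * (x i * (B j.succ - B 0 * x j) + x j * (B i.succ - B 0 * x i)) / oneSubNormSq x ^ 2
        + 8 * x i * x j * LBNumer B x / oneSubNormSq x ^ 3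
        + if i = j then 2 * (LBNumer B x / oneSubNormSq x ^ 2 - B 0 / oneSubNormSq x) else 0 := by
  have hD := (oneSubNormSq_pos hx).ne'
  have hpd : (fun y => pd j (LB B) y) =ᶠ[𝓝 x] fun y => 2 * (B j.succ - B 0 * y j) / oneSubNormSq y
      + 2 * y j * LBNumer B y / oneSubNormSq y ^ 2 := by
    filter_upwards [isOpen_diskR.mem_nhds hx] with y hy using pd_LB B hy j
  rw [pd_congr_of_eventuallyEq hpd,
    pd_add (by fun_prop (disch := simp [hD])) (by fun_prop (disch := simp [hD])),
    pd_div (by fun_prop) (by fun_prop) hD, pd_div (by fun_prop) (by fun_prop) (pow_ne_zero 2 hD)]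
  simp (disch := fun_prop) only [pd_mul, pd_sub, pd_const, pd_apply, pd_pow, pd_LBNumer,
    pd_oneSubNormSq]
  split_ifs <;> field_simp <;> ring

end HesseEquation

open Finset in
/-- on the Poincaré disk of curvature -1, every Λ_B(u) = (B,Ξ(u))
satisfies the Hesse equation Hess_G(Λ_B) = G·Λ_B. -/
theorem LB_satisfies_hesse_equation (B : Fin 3 → ℝ) (x : Fin 2 → ℝ) (hx : x ∈ diskR)
    (i j : Fin 2) :
    pd i (fun y => pd j (LB B) y) x - (∑ k, Gamma gP gPinv x k i j * pd k (LB B) x)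
      = gP x i j * LB B x := by
  have hD := (oneSubNormSq_pos hx).ne'
  rw [sum_Gamma_gP_mul hx, pd_pd_LB B hx]
  simp only [pd_LB B hx, Fin.sum_univ_two, gP_eq_conformal]
  rw [LB_eq_div]
  split_ifs
  · subst j
    simp only [LBNumer, oneSubNormSq, Fin.succ_zero_eq_one, Fin.succ_one_eq_two] at hD ⊢
    field_simp
    ring
  · field_simp
    ring
end
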